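/- arXiv:1908.07260 — 4 statements merged into one kernel-verified Lean document; each statement's English description precedes it below -/
import Mathlib

section
/- For every integer K ≥ 1 there exist q > 0 and B > 0 such that the following holds. For every t > q + 1, every n ≥ 1, every sequence of integers s_0, …, s_{n−1} with |s_k| ≤ K, and every w ∈ ℂ satisfying f^n(w) = E^n(t) and, for each 0 ≤ k ≤ n−1, Re f^k(w) ≥ q and (2s_k−1)π ≤ Im f^k(w) ≤ (2s_k+1)π, one has t − B ≤ Re w ≤ t + B. -/
/-! In a horizontal strip far to the right, `f p z = exp z + O(exp (c · Re z))` for some `c < 1`,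
so `‖f p z‖` lies between `exp (Re z) / 2` and `3 exp (Re z) / 2`; in the strip `‖z‖` and `Re z`
differ by at most the strip's half-width. Since `f^[n] w = E^[n] t` is real, one compares the orbit
of `w` with that of `t` backwards: if `Re z_{k+1}` is within `4` of `E y_k = exp (y_k - 1)`, then
taking logarithms puts `Re z_k` within `4` of `y_k`, because `log` turns the additive error,
which is small next to `exp (y_k - 1)`, into a bounded one. -/

open Complex Filter Set

/-- The function `f(z) = ∑_{k=0}^{p-1} exp(ω^k z)` with `ω = exp(2πi/p)`. -/
noncomputable def f (p : ℕ) (z : ℂ) : ℂ :=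
  ∑ k ∈ Finset.range p, Complex.exp (Complex.exp (2 * Real.pi * Complex.I / p) ^ k * z)

/-- The real function `E(t) = (1/e)·e^t = e^{t-1}`. -/
noncomputable def E (t : ℝ) : ℝ := Real.exp (t - 1)

lemma re_exp_two_pi_I_div_pow_mul (p k : ℕ) (z : ℂ) :
    (Complex.exp (2 * Real.pi * I / p) ^ k * z).re
      = Real.cos (2 * Real.pi * k / p) * z.re - Real.sin (2 * Real.pi * k / p) * z.im := by
  have : Complex.exp (2 * Real.pi * I / p) ^ k = Complex.exp ((2 * Real.pi * k / p : ℝ) * I) := by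
    rw [← Complex.exp_nat_mul]; push_cast; ring_nf
  rw [this, mul_re, exp_ofReal_mul_I_re, exp_ofReal_mul_I_im]

lemma norm_exp_exp_two_pi_I_div_pow_mul_le (p k : ℕ) {C : ℝ} {z : ℂ} (hz : |z.im| ≤ C) :
    ‖Complex.exp (Complex.exp (2 * Real.pi * I / p) ^ k * z)‖
      ≤ Real.exp C * Real.exp (Real.cos (2 * Real.pi * k / p) * z.re) := by
  rw [norm_exp, re_exp_two_pi_I_div_pow_mul, ← Real.exp_add]
  gcongr
  have : |Real.sin (2 * Real.pi * k / p) * z.im| ≤ C :=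
    (abs_mul _ _).trans_le ((mul_le_of_le_one_left (abs_nonneg _) (Real.abs_sin_le_one _)).trans hz)
  linarith [neg_abs_le (Real.sin (2 * Real.pi * k / p) * z.im)]

lemma cos_two_pi_mul_div_lt_one {p k : ℕ} (hk : k ≠ 0) (hkp : k < p) :
    Real.cos (2 * Real.pi * k / p) < 1 := by
  have hk' : (0 : ℝ) < k := by exact_mod_cast Nat.pos_of_ne_zero hk
  have hkp' : (k : ℝ) < p := by exact_mod_cast hkp
  have hx : 0 < 2 * Real.pi * k / p := div_pos (by positivity) (hk'.trans hkp')
  refine (Real.cos_le_one _).lt_of_ne fun h => hx.ne' ?_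
  refine (Real.cos_eq_one_iff_of_lt_of_lt (by linarith [Real.pi_pos]) ?_).1 h
  rw [div_lt_iff₀ (hk'.trans hkp')]
  nlinarith [Real.pi_pos]

lemma f_sub_exp {p : ℕ} (hp : 0 < p) (z : ℂ) :
    f p z - Complex.exp z
      = ∑ k ∈ (Finset.range p).erase 0, Complex.exp (Complex.exp (2 * Real.pi * I / p) ^ k * z) := by
  rw [f, ← Finset.add_sum_erase _ _ (Finset.mem_range.2 hp), pow_zero, one_mul, add_sub_cancel_left]

lemma eventually_mul_exp_le {c : ℝ} (hc : c < 1) (A : ℝ) :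
    ∀ᶠ x in atTop, A * Real.exp (c * x) ≤ Real.exp x := by
  filter_upwards [(Real.tendsto_exp_atTop.comp
    (tendsto_id.const_mul_atTop (sub_pos.2 hc))).eventually_ge_atTop A] with x hx
  calc A * Real.exp (c * x) ≤ Real.exp ((1 - c) * x) * Real.exp (c * x) := by
        gcongr; exact hx
    _ = Real.exp x := by rw [← Real.exp_add]; ring_nf

lemma eventually_norm_f_sub_exp_le {p : ℕ} (hp : 0 < p) (C : ℝ) :
    ∀ᶠ q in atTop, ∀ z : ℂ, q ≤ z.re → |z.im| ≤ C →
      ‖f p z - Complex.exp z‖ ≤ Real.exp z.re / 2 := by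
  set S := (Finset.range p).erase 0
  have hterms : ∀ᶠ x in atTop, ∀ k ∈ S,
      2 * p * Real.exp C * Real.exp (Real.cos (2 * Real.pi * k / p) * x) ≤ Real.exp x :=
    (eventually_all_finset S).2 fun k hk => eventually_mul_exp_le
      (cos_two_pi_mul_div_lt_one (Finset.ne_of_mem_erase hk)
        (Finset.mem_range.1 (Finset.mem_of_mem_erase hk))) _
  have hcard : (S.card : ℝ) ≤ p := by
    exact_mod_cast (Finset.card_erase_le).trans (Finset.card_range p).le
  have hp' : (0 : ℝ) < p := by exact_mod_cast hp
  filter_upwards [eventually_forall_ge_atTop.2 hterms] with q hq z hqz hzC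
  rw [f_sub_exp hp]
  calc _ ≤ ∑ k ∈ S, ‖Complex.exp (Complex.exp (2 * Real.pi * I / p) ^ k * z)‖ := norm_sum_le _ _
    _ ≤ ∑ _k ∈ S, Real.exp z.re / (2 * p) := Finset.sum_le_sum fun k hk => by
        rw [le_div_iff₀ (by positivity)]
        calc _ ≤ Real.exp C * Real.exp (Real.cos (2 * Real.pi * k / p) * z.re) * (2 * p) := by
              gcongr; exact norm_exp_exp_two_pi_I_div_pow_mul_le p k hzC
          _ = 2 * p * Real.exp C * Real.exp (Real.cos (2 * Real.pi * k / p) * z.re) := by ring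
          _ ≤ Real.exp z.re := hq z.re hqz k hk
    _ = S.card * (Real.exp z.re / (2 * p)) := by rw [Finset.sum_const, nsmul_eq_mul]
    _ ≤ p * (Real.exp z.re / (2 * p)) := by gcongr
    _ = Real.exp z.re / 2 := by field_simp

lemma self_le_iterate_E (t : ℝ) (n : ℕ) : t ≤ E^[n] t :=
  Function.id_le_iterate_of_id_le
    (fun x => show x ≤ Real.exp (x - 1) by linarith [Real.add_one_le_exp (x - 1)]) n t

lemma abs_re_sub_le_four_of_step {C Y : ℝ} {z z' : ℂ}
    (hstep : ‖z' - Complex.exp z‖ ≤ Real.exp z.re / 2) (hre : 0 ≤ z'.re) (him : |z'.im| ≤ C)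
    (h8 : 8 ≤ E Y) (hC : C + 4 ≤ E Y) (hz' : |z'.re - E Y| ≤ 4) : |z.re - Y| ≤ 4 := by
  have hnorm : ‖z'‖ ≤ z'.re + C :=
    (norm_le_abs_re_add_abs_im z').trans (by rw [abs_of_nonneg hre]; linarith)
  have hu := abs_norm_sub_norm_le z' (Complex.exp z)
  rw [norm_exp] at hu
  have hre_le := re_le_norm z'
  rw [abs_le] at hu hz' ⊢
  constructor
  · suffices Real.exp (Y - 4) ≤ Real.exp z.re by linarith [Real.exp_le_exp.1 this]
    have h3 : 4 * Real.exp (-3) ≤ 1 := by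
      have := Real.add_one_le_exp 3
      rw [Real.exp_neg, mul_inv_le_iff₀ (Real.exp_pos 3)]; linarith
    calc Real.exp (Y - 4) = Real.exp (-3) * E Y := by rw [E, ← Real.exp_add]; ring_nf
      _ ≤ E Y / 4 := by nlinarith
      _ ≤ Real.exp z.re := by linarith
  · suffices Real.exp z.re ≤ Real.exp (Y + 4) by linarith [Real.exp_le_exp.1 this]
    have h5 := Real.add_one_le_exp 5
    calc Real.exp z.re ≤ 4 * E Y := by linarith
      _ ≤ Real.exp 5 * E Y := by gcongr; linarith
      _ = Real.exp (Y + 4) := by rw [E, ← Real.exp_add]; ring_nf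

lemma abs_re_sub_le_four_of_shadowing {C : ℝ} {n : ℕ} {z : ℕ → ℂ} {y : ℕ → ℝ}
    (hstep : ∀ k < n, ‖z (k + 1) - Complex.exp (z k)‖ ≤ Real.exp (z k).re / 2)
    (hstrip : ∀ k < n, 0 ≤ (z (k + 1)).re ∧ |(z (k + 1)).im| ≤ C)
    (hy : ∀ k < n, y (k + 1) = E (y k)) (h8 : ∀ k < n, 8 ≤ E (y k))
    (hC : ∀ k < n, C + 4 ≤ E (y k)) (hn : z n = y n) :
    |(z 0).re - y 0| ≤ 4 := by
  refine Nat.decreasingInduction (motive := fun k _ => |(z k).re - y k| ≤ 4)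
    (fun k hk ih => ?_) ?_ (Nat.zero_le n)
  · exact abs_re_sub_le_four_of_step (hstep k hk) (hstrip k hk).1 (hstrip k hk).2 (h8 k hk) (hC k hk)
      (hy k hk ▸ ih)
  · rw [hn, ofReal_re, sub_self, abs_zero]; norm_num

lemma abs_le_two_mul_add_one_mul_pi {x s K : ℝ} (hs : |s| ≤ K)
    (h₁ : (2 * s - 1) * Real.pi ≤ x) (h₂ : x ≤ (2 * s + 1) * Real.pi) :
    |x| ≤ (2 * K + 1) * Real.pi := by
  rw [abs_le] at hs ⊢
  constructor <;> nlinarith [Real.pi_pos]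

theorem real_part_estimate_along_inverse_branches
    (p : ℕ) (hp : 3 ≤ p) (K : ℤ) (hK : 1 ≤ K) :
    ∃ q : ℝ, 0 < q ∧ ∃ B : ℝ, 0 < B ∧
      ∀ t : ℝ, q + 1 < t →
        ∀ n : ℕ, 1 ≤ n →
          ∀ s : ℕ → ℤ, (∀ k < n, |s k| ≤ K) →
            ∀ w : ℂ,
              (f p)^[n] w = ((E^[n] t : ℝ) : ℂ) →
              (∀ k < n, q ≤ ((f p)^[k] w).re ∧
                (2 * (s k : ℝ) - 1) * Real.pi ≤ ((f p)^[k] w).im ∧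
                ((f p)^[k] w).im ≤ (2 * (s k : ℝ) + 1) * Real.pi) →
              t - B ≤ w.re ∧ w.re ≤ t + B := by
  set C := (2 * (K : ℝ) + 1) * Real.pi
  have hK' : (1 : ℝ) ≤ K := by exact_mod_cast hK
  have hC : 0 ≤ C := mul_nonneg (by linarith) Real.pi_pos.le
  obtain ⟨q, hq0, hq8, hqC, hqf⟩ := ((eventually_gt_atTop 0).and
    ((Real.tendsto_exp_atTop.eventually_ge_atTop 8).and
    ((Real.tendsto_exp_atTop.eventually_ge_atTop (C + 4)).and
    (eventually_norm_f_sub_exp_le (by omega : 0 < p) C)))).exists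
  refine ⟨q, hq0, 4, by norm_num, fun t ht n _ s hs w hw horb => ?_⟩
  have him : ∀ k < n, |((f p)^[k] w).im| ≤ C := fun k hk =>
    abs_le_two_mul_add_one_mul_pi (by exact_mod_cast hs k hk) (horb k hk).2.1 (horb k hk).2.2
  have hnext : ∀ k < n, 0 ≤ ((f p)^[k + 1] w).re ∧ |((f p)^[k + 1] w).im| ≤ C := by
    intro k hk
    rcases (Nat.succ_le_of_lt hk).lt_or_eq with hlt | rfl
    · exact ⟨hq0.le.trans (horb _ hlt).1, him _ hlt⟩
    · rw [hw, ofReal_re, ofReal_im, abs_zero]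
      exact ⟨by linarith [self_le_iterate_E t (k + 1)], hC⟩
  have hlarge : ∀ k, Real.exp q ≤ E (E^[k] t) := fun k =>
    Real.exp_le_exp.2 (by linarith [self_le_iterate_E t k])
  have key := abs_re_sub_le_four_of_shadowing (z := fun k => (f p)^[k] w) (y := fun k => E^[k] t)
    (fun k hk => by
      simpa only [Function.iterate_succ_apply'] using hqf _ (horb k hk).1 (him k hk))
    hnext (fun k _ => Function.iterate_succ_apply' E k t) (fun k _ => hq8.trans (hlarge k))
    (fun k _ => hqC.trans (hlarge k)) hw
  rw [Function.iterate_zero_apply, Function.iterate_zero_apply, abs_le] at key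
  exact ⟨by linarith [key.1], by linarith [key.2]⟩
end

section
/- There exists r_0 > 0 such that for every real r > r_0: if r·sin(π/p) is an even integer multiple of π then f(r·exp(iπ/p)) is real and strictly positive, and if r·sin(π/p) is an odd integer multiple of π then f(r·exp(iπ/p)) is real and strictly negative. -/
/-! On the ray `z = r e^{iπ/p}` the points `ω^k z = r e^{i(2k+1)π/p}` come in conjugate pairs
`k ↔ p - 1 - k`, so `f z` is real. The two terms `k = 0, p - 1` have real part
`e^{r cos(π/p)} cos(r sin(π/p))`, which is `± e^{r cos(π/p)}` at the given radii, while the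
other `p - 2` terms have modulus at most `e^{r cos(3π/p)}`, exponentially smaller as `r → ∞`. -/

open Complex Filter Set

open scoped Real ComplexConjugate

lemma Real.cos_le_cos_of_le_of_le_two_pi_sub {a x : ℝ} (ha : 0 ≤ a) (hax : a ≤ x)
    (hxa : x ≤ 2 * π - a) : Real.cos x ≤ Real.cos a := by
  rcases le_total x π with hx | hx
  · exact Real.cos_le_cos_of_nonneg_of_le_pi ha hx hax
  · rw [← Real.cos_two_pi_sub x]
    exact Real.cos_le_cos_of_nonneg_of_le_pi ha (by linarith) (by linarith)

lemma Real.eventually_mul_exp_lt_exp {a b : ℝ} (hab : a < b) (C : ℝ) :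
    ∀ᶠ r in atTop, C * Real.exp (r * a) < Real.exp (r * b) := by
  have h := Real.tendsto_exp_atTop.comp (tendsto_id.atTop_mul_const (sub_pos.2 hab))
  filter_upwards [h.eventually_gt_atTop C] with r hr
  calc C * Real.exp (r * a) < Real.exp (r * (b - a)) * Real.exp (r * a) :=
        mul_lt_mul_of_pos_right hr (Real.exp_pos _)
    _ = Real.exp (r * b) := by rw [← Real.exp_add]; congr 1; ring

lemma re_exp_ofReal_mul_exp_mul_I (r θ : ℝ) :
    (exp (r * exp (θ * I))).re = Real.exp (r * Real.cos θ) * Real.cos (r * Real.sin θ) := by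
  rw [exp_re, exp_mul_I]
  simp [← ofReal_cos, ← ofReal_sin]

lemma norm_exp_ofReal_mul_exp_mul_I (r θ : ℝ) :
    ‖exp (r * exp (θ * I))‖ = Real.exp (r * Real.cos θ) := by
  rw [norm_exp, re_ofReal_mul, exp_ofReal_mul_I_re]

lemma exp_ofReal_mul_exp_two_pi_sub_mul_I (r θ : ℝ) :
    exp (r * exp ((2 * π - θ : ℝ) * I)) = conj (exp (r * exp (θ * I))) := by
  rw [← exp_conj, map_mul, conj_ofReal, ← exp_conj, map_mul, conj_ofReal, conj_I]
  push_cast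
  rw [sub_mul, exp_sub, exp_two_pi_mul_I, mul_neg, exp_neg, one_div]

/-- The argument of `ω^k e^{iπ/p}`. -/
noncomputable def rayAngle (p k : ℕ) : ℝ := (2 * k + 1) * π / p

lemma f_ofReal_mul_exp_pi_div (p : ℕ) (r : ℝ) :
    f p (r * exp (I * (π / p))) = ∑ k ∈ Finset.range p, exp (r * exp (rayAngle p k * I)) := by
  rcases eq_or_ne p 0 with rfl | hp
  · simp [f]
  refine Finset.sum_congr rfl fun k _ => congrArg exp ?_
  rw [← exp_nat_mul, mul_left_comm, ← exp_add]
  congr 2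
  simp only [rayAngle]
  push_cast
  field_simp

lemma rayAngle_zero (p : ℕ) : rayAngle p 0 = π / p := by
  simp [rayAngle]

lemma rayAngle_eq_two_pi_sub {p j k : ℕ} (h : j + k + 1 = p) :
    rayAngle p j = 2 * π - rayAngle p k := by
  have hp : (p : ℝ) ≠ 0 := by norm_cast; omega
  have h' : (j : ℝ) + k + 1 = p := by exact_mod_cast h
  simp only [rayAngle]
  field_simp
  rw [← h']
  ring

lemma cos_rayAngle_le {p k : ℕ} (hk : 0 < k) (hkp : k + 2 ≤ p) :
    Real.cos (rayAngle p k) ≤ Real.cos (3 * π / p) := by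
  have hk' : (1 : ℝ) ≤ k := by exact_mod_cast hk
  have hkp' : (k : ℝ) + 2 ≤ p := by exact_mod_cast hkp
  apply Real.cos_le_cos_of_le_of_le_two_pi_sub (by positivity)
  · unfold rayAngle; gcongr; linarith
  · have hp : (0 : ℝ) < p := by linarith
    rw [rayAngle, div_le_iff₀ hp, sub_mul, div_mul_cancel₀ _ hp.ne']
    nlinarith [Real.pi_pos]

lemma im_f_ofReal_mul_exp_pi_div (p : ℕ) (r : ℝ) :
    (f p (r * exp (I * (π / p)))).im = 0 := by
  rw [f_ofReal_mul_exp_pi_div, ← conj_eq_iff_im, map_sum,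
    ← Finset.sum_range_reflect (fun k => exp (r * exp (rayAngle p k * I))) p]
  refine Finset.sum_congr rfl fun k hk => ?_
  rw [← exp_ofReal_mul_exp_two_pi_sub_mul_I,
    ← rayAngle_eq_two_pi_sub (j := p - 1 - k) (k := k) (by have := Finset.mem_range.1 hk; omega)]

lemma abs_re_sum_range_sub_two_mul_re_le {m : ℕ} {g : ℕ → ℂ} {B : ℝ}
    (h_last : g (m + 1) = conj (g 0)) (h_middle : ∀ k < m, ‖g (k + 1)‖ ≤ B) :
    |(∑ k ∈ Finset.range (m + 2), g k).re - 2 * (g 0).re| ≤ m * B := by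
  rw [Finset.sum_range_succ', Finset.sum_range_succ, h_last]
  calc _ = |(∑ k ∈ Finset.range m, g (k + 1)).re| := by
        simp only [add_re, conj_re]; congr 1; ring
    _ ≤ ‖∑ k ∈ Finset.range m, g (k + 1)‖ := abs_re_le_norm _
    _ ≤ ∑ k ∈ Finset.range m, ‖g (k + 1)‖ := norm_sum_le _ _
    _ ≤ ∑ k ∈ Finset.range m, B := Finset.sum_le_sum fun k hk => h_middle k (Finset.mem_range.1 hk)
    _ = m * B := by simp

lemma norm_exp_ofReal_mul_exp_rayAngle_le {p k : ℕ} {r : ℝ} (hr : 0 ≤ r) (hk : 0 < k)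
    (hkp : k + 2 ≤ p) :
    ‖exp (r * exp (rayAngle p k * I))‖ ≤ Real.exp (r * Real.cos (3 * π / p)) := by
  rw [norm_exp_ofReal_mul_exp_mul_I]
  exact Real.exp_le_exp.2 (mul_le_mul_of_nonneg_left (cos_rayAngle_le hk hkp) hr)

lemma abs_re_f_ofReal_mul_exp_pi_div_sub_le {p : ℕ} (hp : 2 ≤ p) {r : ℝ} (hr : 0 ≤ r) :
    |(f p (r * exp (I * (π / p)))).re
        - 2 * (Real.exp (r * Real.cos (π / p)) * Real.cos (r * Real.sin (π / p)))|
      ≤ (p - 2) * Real.exp (r * Real.cos (3 * π / p)) := by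
  obtain ⟨m, rfl⟩ : ∃ m, p = m + 2 := ⟨p - 2, by omega⟩
  have h := abs_re_sum_range_sub_two_mul_re_le (m := m)
    (g := fun k => exp (r * exp (rayAngle (m + 2) k * I)))
    (by rw [rayAngle_eq_two_pi_sub (k := 0) (by omega), exp_ofReal_mul_exp_two_pi_sub_mul_I])
    (fun k hk => norm_exp_ofReal_mul_exp_rayAngle_le hr k.succ_pos (by omega))
  rw [re_exp_ofReal_mul_exp_mul_I, rayAngle_zero] at h
  rw [f_ofReal_mul_exp_pi_div]
  convert h using 2
  push_cast
  ring

lemma Real.cos_three_mul_pi_div_lt_cos_pi_div {p : ℕ} (hp : 3 ≤ p) :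
    Real.cos (3 * π / p) < Real.cos (π / p) := by
  have hp' : (3 : ℝ) ≤ p := by exact_mod_cast hp
  apply Real.cos_lt_cos_of_nonneg_of_le_pi (by positivity)
  · rw [div_le_iff₀ (by positivity)]; nlinarith [Real.pi_pos]
  · gcongr; linarith [Real.pi_pos]

theorem sign_alternation_on_V0 (p : ℕ) (hp : 3 ≤ p) :
    ∃ r₀ : ℝ, 0 < r₀ ∧ ∀ r : ℝ, r₀ < r →
      ((∃ n : ℤ, r * Real.sin (Real.pi / p) = 2 * n * Real.pi) →
        (f p ((r : ℂ) * Complex.exp (Complex.I * (Real.pi / p)))).im = 0 ∧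
        0 < (f p ((r : ℂ) * Complex.exp (Complex.I * (Real.pi / p)))).re) ∧
      ((∃ n : ℤ, r * Real.sin (Real.pi / p) = (2 * n + 1) * Real.pi) →
        (f p ((r : ℂ) * Complex.exp (Complex.I * (Real.pi / p)))).im = 0 ∧
        (f p ((r : ℂ) * Complex.exp (Complex.I * (Real.pi / p)))).re < 0) := by
  obtain ⟨a, ha⟩ := eventually_atTop.1
    (Real.eventually_mul_exp_lt_exp (Real.cos_three_mul_pi_div_lt_cos_pi_div hp) (p - 2))
  refine ⟨max a 1, by positivity, fun r hr => ?_⟩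
  have h_dominant := ha r ((le_max_left a 1).trans hr.le)
  have h_estimate := abs_le.1 (abs_re_f_ofReal_mul_exp_pi_div_sub_le (by omega : 2 ≤ p)
    (zero_le_one.trans ((le_max_right a 1).trans hr.le)))
  have h_pos := Real.exp_pos (r * Real.cos (π / p))
  refine ⟨fun ⟨n, hn⟩ => ⟨im_f_ofReal_mul_exp_pi_div p r, ?_⟩,
    fun ⟨n, hn⟩ => ⟨im_f_ofReal_mul_exp_pi_div p r, ?_⟩⟩
  · rw [hn, show 2 * (n : ℝ) * π = n * (2 * π) by ring, Real.cos_int_mul_two_pi] at h_estimate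
    linarith
  · rw [hn, show (2 * (n : ℝ) + 1) * π = n * (2 * π) + π by ring,
      Real.cos_int_mul_two_pi_add_pi] at h_estimate
    linarith
end

section
/- There exists an integer M ∈ ℕ such that for every integer m > M and every real x: if x > (2m+1)π·cot(π/p) then Re f(x + (2m+1)πi) < 0, and if x > (2m−1)π·cot(π/p) then Re f(x + (2m−1)πi) < 0. -/
/-!
Put `v = π / p`, `z = x + iy` with `cos y = -1`, `y > 0` and `t = x - y cot v ≥ 0`, so that
`0 < arg z ≤ v`. The `k = 0` term of `Re f z` is `-eˣ`. Rotation by `ω^(p-1) = e^{-2iv}` reflects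
the ray `arg z = v` in the real axis, which makes the `k = p - 1` term equal to
`-e^{x - (1 - cos 2v) t} cos (t sin 2v)`: either `cos (t sin 2v) ≥ 0`, or `t ≥ π / (2 sin 2v)` and
this term is at most `e^{-δ} eˣ` in modulus for a fixed `δ > 0`. So these two terms sum to at most
`-ε eˣ` with `ε = 1 - e^{-δ}`.
For `1 ≤ k ≤ p - 2` the angle of `ω^k z` lies in `[3v, 2π - 3v]`, so `Re (ω^k z) ≤ x - β y` with
`β = (cos v - cos 3v) / sin v > 0`, so these `p - 2` terms sum to at most `(p - 2) e^{-βy} eˣ`,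
which is below `ε eˣ` once `y` is large.
-/

open Complex Filter Set

lemma Finset.sum_range_eq_first_add_last_add_sum {M : Type*} [AddCommMonoid M] (g : ℕ → M)
    {n : ℕ} (hn : 2 ≤ n) :
    ∑ k ∈ Finset.range n, g k = g 0 + g (n - 1) + ∑ k ∈ Finset.range (n - 2), g (k + 1) := by
  obtain ⟨q, rfl⟩ : ∃ q, n = q + 2 := ⟨n - 2, by omega⟩
  rw [Finset.sum_range_succ, Finset.sum_range_succ']
  simp only [add_tsub_cancel_right, Nat.add_one_sub_one]
  abel

namespace Real

lemma cos_le_cos_of_le_of_le_two_pi_sub_s16 {a φ : ℝ} (ha₀ : 0 ≤ a) (ha : a ≤ φ)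
    (hφ : φ ≤ 2 * π - a) : cos φ ≤ cos a := by
  rcases le_total φ π with h | h
  · exact cos_le_cos_of_nonneg_of_le_pi ha₀ h ha
  · rw [← cos_two_pi_sub φ]
    exact cos_le_cos_of_nonneg_of_le_pi ha₀ (by linarith) (by linarith)

lemma one_sub_exp_le_one_add_exp_mul_cos {a b t : ℝ} (ha : 0 ≤ a) (hb : 0 < b) (ht : 0 ≤ t) :
    1 - exp (-(a * (π / (2 * b)))) ≤ 1 + exp (-(a * t)) * cos (b * t) := by
  rcases le_total (b * t) (π / 2) with h | h
  · have hcos : 0 ≤ cos (b * t) := cos_nonneg_of_mem_Icc ⟨by nlinarith [pi_pos], h⟩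
    nlinarith [exp_pos (-(a * (π / (2 * b)))), mul_nonneg (exp_pos (-(a * t))).le hcos]
  · have hdecay : exp (-(a * t)) ≤ exp (-(a * (π / (2 * b)))) := by
      gcongr
      rw [div_le_iff₀ (by positivity)]
      linarith
    nlinarith [neg_one_le_cos (b * t), exp_pos (-(a * t))]

section Rotation

variable {v : ℝ}

/-- Writing `x + yi = t + (y / sin v) e^{iv}` with `t = x - y cot v`, a rotation by `θ` gives
`t e^{iθ} + (y / sin v) e^{i(θ + v)}`. -/
lemma cos_mul_sub_sin_mul_eq (hv : sin v ≠ 0) (θ x y : ℝ) :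
    cos θ * x - sin θ * y = cos θ * (x - y * (cos v / sin v)) + y * cos (θ + v) / sin v := by
  rw [cos_add]
  field_simp
  ring

lemma sin_mul_add_cos_mul_eq (hv : sin v ≠ 0) (θ x y : ℝ) :
    sin θ * x + cos θ * y = sin θ * (x - y * (cos v / sin v)) + y * sin (θ + v) / sin v := by
  rw [sin_add]
  field_simp
  ring

lemma cos_mul_sub_sin_mul_le (hv₀ : 0 < v) {θ x y : ℝ} (hθ₁ : 2 * v ≤ θ)
    (hθ₂ : θ ≤ 2 * π - 4 * v) (hy : 0 ≤ y) (hx : y * (cos v / sin v) ≤ x) :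
    cos θ * x - sin θ * y ≤ x - (cos v - cos (3 * v)) / sin v * y := by
  have hsin : 0 < sin v := sin_pos_of_pos_of_lt_pi hv₀ (by linarith)
  have hcos : cos (θ + v) ≤ cos (3 * v) :=
    cos_le_cos_of_le_of_le_two_pi_sub_s16 (by linarith) (by linarith) (by linarith)
  have key : y * cos (θ + v) / sin v ≤ y * cos (3 * v) / sin v := by gcongr
  rw [cos_mul_sub_sin_mul_eq hsin.ne']
  have ht : cos θ * (x - y * (cos v / sin v)) ≤ x - y * (cos v / sin v) :=
    mul_le_of_le_one_left (by linarith) (cos_le_one θ)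
  linarith [show x - (cos v - cos (3 * v)) / sin v * y
    = x - y * (cos v / sin v) + y * cos (3 * v) / sin v by ring]

lemma exp_mul_cos_le_exp_sub (hv₀ : 0 < v) {θ x y : ℝ} (hθ₁ : 2 * v ≤ θ)
    (hθ₂ : θ ≤ 2 * π - 4 * v) (hy : 0 ≤ y) (hx : y * (cos v / sin v) ≤ x) :
    exp (cos θ * x - sin θ * y) * cos (sin θ * x + cos θ * y)
      ≤ exp (x - (cos v - cos (3 * v)) / sin v * y) := by
  calc exp (cos θ * x - sin θ * y) * cos (sin θ * x + cos θ * y)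
      ≤ exp (cos θ * x - sin θ * y) := mul_le_of_le_one_right (exp_pos _).le (cos_le_one _)
    _ ≤ exp (x - (cos v - cos (3 * v)) / sin v * y) :=
      exp_le_exp.2 (cos_mul_sub_sin_mul_le hv₀ hθ₁ hθ₂ hy hx)

lemma exp_mul_cos_add_exp_mul_cos_le (hv₀ : 0 < v) (hv : v < π / 2) {x y : ℝ} (hy : cos y = -1)
    (hx : y * (cos v / sin v) ≤ x) :
    exp x * cos y + exp (cos (2 * π - 2 * v) * x - sin (2 * π - 2 * v) * y)
        * cos (sin (2 * π - 2 * v) * x + cos (2 * π - 2 * v) * y)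
      ≤ -((1 - exp (-((1 - cos (2 * v)) * (π / (2 * sin (2 * v)))))) * exp x) := by
  have hsin : sin v ≠ 0 := (sin_pos_of_pos_of_lt_pi hv₀ (by linarith)).ne'
  have hsin_y : sin y = 0 := by nlinarith [sin_sq_add_cos_sq y]
  set t := x - y * (cos v / sin v) with ht
  have hre : cos (2 * π - 2 * v) * x - sin (2 * π - 2 * v) * y = x + -((1 - cos (2 * v)) * t) := by
    rw [ht, cos_mul_sub_sin_mul_eq hsin, show 2 * π - 2 * v + v = 2 * π - v by ring,
      cos_two_pi_sub, cos_two_pi_sub]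
    field_simp
    ring
  have him : sin (2 * π - 2 * v) * x + cos (2 * π - 2 * v) * y = -(y + sin (2 * v) * t) := by
    rw [ht, sin_mul_add_cos_mul_eq hsin, show 2 * π - 2 * v + v = 2 * π - v by ring,
      sin_two_pi_sub, sin_two_pi_sub]
    field_simp
    ring
  have hbound := one_sub_exp_le_one_add_exp_mul_cos (a := 1 - cos (2 * v)) (b := sin (2 * v))
    (t := t) (by linarith [cos_le_one (2 * v)]) (sin_pos_of_pos_of_lt_pi (by linarith) (by linarith))
    (by linarith)
  rw [hre, him, cos_neg, cos_add, hy, hsin_y, exp_add]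
  nlinarith [exp_pos x]

end Rotation

lemma cos_two_mul_int_add_one_mul_pi (n : ℤ) : cos ((2 * n + 1) * π) = -1 := by
  rw [show (2 * n + 1) * π = n * (2 * π) + π by ring]
  exact cos_int_mul_two_pi_add_pi n

end Real

lemma exp_two_pi_mul_I_div_pow (p k : ℕ) :
    Complex.exp (2 * Real.pi * I / p) ^ k = Complex.exp ((2 * Real.pi * k / p : ℝ) * I) := by
  rw [← Complex.exp_nat_mul]
  congr 1
  push_cast
  ring

lemma re_exp_exp_ofReal_mul_I_mul (θ x y : ℝ) :
    (Complex.exp (Complex.exp (θ * I) * ⟨x, y⟩)).re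
      = Real.exp (Real.cos θ * x - Real.sin θ * y) * Real.cos (Real.sin θ * x + Real.cos θ * y) := by
  rw [Complex.exp_re]
  simp only [mul_re, mul_im, exp_ofReal_mul_I_re, exp_ofReal_mul_I_im, add_comm]

open Real in
lemma three_mul_pi_div_le {p : ℕ} (hp : 3 ≤ p) : 3 * (π / p) ≤ π := by
  rw [mul_div_assoc', div_le_iff₀ (by positivity), mul_comm]
  gcongr
  exact_mod_cast hp

open Real in
lemma re_exp_pow_mul_le {p k : ℕ} (hk₁ : 1 ≤ k) (hk₂ : k + 2 ≤ p) {x y : ℝ}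
    (hy : 0 ≤ y) (hx : y * (Real.cos (π / p) / Real.sin (π / p)) ≤ x) :
    (Complex.exp (Complex.exp (2 * π * I / p) ^ k * ⟨x, y⟩)).re
      ≤ Real.exp (x - (Real.cos (π / p) - Real.cos (3 * (π / p))) / Real.sin (π / p) * y) := by
  have hp : (0 : ℝ) < p := by exact_mod_cast (by omega : 0 < p)
  have hv : 2 * π * (k : ℝ) / p = 2 * (π / p) * k := by ring
  have hvp : 2 * π = 2 * (π / p) * p := by field_simp
  have hk₁ : (1 : ℝ) ≤ k := by exact_mod_cast hk₁
  have hk₂ : (k : ℝ) + 2 ≤ p := by exact_mod_cast hk₂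
  have hv₀ : 0 < π / p := by positivity
  rw [exp_two_pi_mul_I_div_pow, re_exp_exp_ofReal_mul_I_mul, hv]
  refine Real.exp_mul_cos_le_exp_sub hv₀ ?_ ?_ hy hx
  · nlinarith
  · rw [hvp]
    nlinarith

open Real in
lemma exists_re_f_le (p : ℕ) (hp : 3 ≤ p) :
    ∃ β > 0, ∃ ε > 0, ∀ x y : ℝ, 0 ≤ y → Real.cos y = -1 →
      y * (Real.cos (π / p) / Real.sin (π / p)) ≤ x →
        (f p ⟨x, y⟩).re ≤ Real.exp x * ((p - 2) * Real.exp (-(β * y)) - ε) := by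
  set v := π / p with hv
  have hv₀ : 0 < v := by positivity
  have hv₃ : 3 * v ≤ π := three_mul_pi_div_le hp
  refine ⟨(Real.cos v - Real.cos (3 * v)) / Real.sin v, ?_,
    1 - Real.exp (-((1 - Real.cos (2 * v)) * (π / (2 * Real.sin (2 * v))))), ?_,
    fun x y hy₀ hy hx => ?_⟩
  · have hcos := Real.cos_lt_cos_of_nonneg_of_le_pi hv₀.le hv₃ (by linarith)
    have hsin := Real.sin_pos_of_pos_of_lt_pi hv₀ (by linarith)
    exact div_pos (by linarith) hsin
  · have hcos := Real.cos_lt_cos_of_nonneg_of_le_pi le_rfl (by linarith : 2 * v ≤ π) (by linarith)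
    have hsin := Real.sin_pos_of_pos_of_lt_pi (by linarith : 0 < 2 * v) (by linarith)
    rw [Real.cos_zero] at hcos
    refine sub_pos.2 (Real.exp_lt_one_iff.2 (neg_neg_of_pos (mul_pos (by linarith) ?_)))
    positivity
  have hlast : 2 * π * ((p - 1 : ℕ) : ℝ) / p = 2 * π - 2 * v := by
    rw [hv, Nat.cast_sub (by omega)]
    field_simp
    ring
  have hpair := Real.exp_mul_cos_add_exp_mul_cos_le hv₀ (by linarith) hy hx
  have hmid := Finset.sum_le_card_nsmul _ _ _ fun k (hk : k ∈ Finset.range (p - 2)) =>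
    re_exp_pow_mul_le (Nat.le_add_left 1 k) (by have := Finset.mem_range.1 hk; omega) hy₀ hx
  rw [Finset.card_range, nsmul_eq_mul, Nat.cast_sub (by omega), ← hv, sub_eq_add_neg x,
    Real.exp_add] at hmid
  rw [f, Complex.re_sum, Finset.sum_range_eq_first_add_last_add_sum _ (by omega), pow_zero,
    one_mul, exp_two_pi_mul_I_div_pow, re_exp_exp_ofReal_mul_I_mul, hlast, Complex.exp_re]
  push_cast at hmid
  linarith

open Real in
lemma exists_re_f_neg (p : ℕ) (hp : 3 ≤ p) :
    ∃ Y : ℝ, ∀ x y : ℝ, Y ≤ y → Real.cos y = -1 →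
      y * (Real.cos (π / p) / Real.sin (π / p)) ≤ x → (f p ⟨x, y⟩).re < 0 := by
  obtain ⟨β, hβ, ε, hε, hle⟩ := exists_re_f_le p hp
  have hdecay : Tendsto (fun y => ((p : ℝ) - 2) * Real.exp (-(β * y))) atTop (nhds 0) := by
    simpa using (Real.tendsto_exp_neg_atTop_nhds_zero.comp
      (tendsto_id.const_mul_atTop hβ)).const_mul ((p : ℝ) - 2)
  obtain ⟨Y, hY⟩ := eventually_atTop.1
    ((eventually_ge_atTop 0).and (hdecay.eventually_lt_const hε))
  refine ⟨Y, fun x y hYy hy hx => ?_⟩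
  obtain ⟨hy₀, hsmall⟩ := hY y hYy
  exact (hle x y hy₀ hy hx).trans_lt (mul_neg_of_pos_of_neg (Real.exp_pos x) (by linarith))

theorem image_of_horizontal_lines_in_left_half_plane (p : ℕ) (hp : 3 ≤ p) :
    ∃ M : ℕ, ∀ m : ℤ, (M : ℤ) < m → ∀ x : ℝ,
      (x > (2 * (m : ℝ) + 1) * Real.pi * (Real.cos (Real.pi / p) / Real.sin (Real.pi / p)) →
        (f p (⟨x, (2 * (m : ℝ) + 1) * Real.pi⟩ : ℂ)).re < 0) ∧
      (x > (2 * (m : ℝ) - 1) * Real.pi * (Real.cos (Real.pi / p) / Real.sin (Real.pi / p)) →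
        (f p (⟨x, (2 * (m : ℝ) - 1) * Real.pi⟩ : ℂ)).re < 0) := by
  obtain ⟨Y, hY⟩ := exists_re_f_neg p hp
  refine ⟨⌈Y⌉₊, fun m hm x => ?_⟩
  have hm : (⌈Y⌉₊ : ℝ) + 1 ≤ m := by exact_mod_cast Int.add_one_le_of_lt hm
  have hYm : Y ≤ (2 * m - 1) * Real.pi := by nlinarith [Nat.le_ceil Y, Real.pi_gt_three]
  refine ⟨fun hx => hY _ _ (by nlinarith [Real.pi_pos]) (Real.cos_two_mul_int_add_one_mul_pi m)
    hx.le, fun hx => hY _ _ hYm ?_ hx.le⟩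
  convert Real.cos_two_mul_int_add_one_mul_pi (m - 1) using 3
  push_cast
  ring
end

section
/- There exists an integer M_0 ∈ ℕ such that for every integer m > M_0 and every ε ∈ (0,1) there exists c_0 > 0 with the following property: for all c ≥ c_0 and every z ∈ ℂ with Re z ≥ c and (2m−1)π ≤ Im z ≤ (2m+1)π, if Re f(z) > 0 then |f(z)| > (1−ε)·e^c. -/
/-!
The term `k = 0` of `f p z` is `exp z`, of modulus `exp (re z)`. Since `ω` is a primitive `p`-th
root of unity, `a := max_{0 < k < p} re (ω ^ k) < 1`, and every other term has modulus
`exp (re (ω ^ k * z)) ≤ exp (a * re z + |im z|)`. In the strip `|im z|` is bounded, so these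
`p - 1` terms are `o (exp (re z))` as `re z → ∞`, and the triangle inequality gives the bound.
-/

open Complex Filter Set

theorem Finset.exists_lt_forall_le_of_forall_lt {ι α : Type*} [LinearOrder α] [NoMinOrder α]
    (s : Finset ι) (g : ι → α) {b : α} (h : ∀ i ∈ s, g i < b) :
    ∃ a < b, ∀ i ∈ s, g i ≤ a := by
  rcases s.eq_empty_or_nonempty with rfl | hs
  · obtain ⟨a, ha⟩ := exists_lt b
    exact ⟨a, ha, by simp⟩
  · exact ⟨s.sup' hs g, (Finset.sup'_lt_iff hs).2 h, fun i hi ↦ Finset.le_sup' g hi⟩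

theorem Complex.re_lt_one_of_norm_eq_one {w : ℂ} (hw : ‖w‖ = 1) (hw1 : w ≠ 1) :
    w.re < 1 := by
  refine lt_of_le_of_ne (hw ▸ re_le_norm w) fun hre ↦ hw1 ?_
  have him : w.im = 0 := abs_re_eq_norm.1 (by rw [hre, hw, abs_one])
  exact Complex.ext hre him

theorem IsPrimitiveRoot.re_pow_lt_one {ζ : ℂ} {n k : ℕ} (hζ : IsPrimitiveRoot ζ n)
    (hk0 : k ≠ 0) (hkn : k < n) : (ζ ^ k).re < 1 :=
  re_lt_one_of_norm_eq_one (by rw [norm_pow, hζ.norm'_eq_one (by omega), one_pow])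
    (hζ.pow_ne_one_of_pos_of_lt hk0 hkn)

theorem Complex.re_mul_le_of_norm_le_one {w : ℂ} (hw : ‖w‖ ≤ 1) (z : ℂ) :
    (w * z).re ≤ w.re * z.re + |z.im| := by
  have him : |w.im| ≤ 1 := (abs_im_le_norm w).trans hw
  have : -(w.im * z.im) ≤ |z.im| := by
    calc -(w.im * z.im) ≤ |w.im * z.im| := neg_le_abs _
      _ = |w.im| * |z.im| := abs_mul _ _
      _ ≤ |z.im| := mul_le_of_le_one_left (abs_nonneg _) him
  rw [mul_re]; linarith

theorem norm_sub_sum_erase_le_norm_sum {ι E : Type*} [DecidableEq ι] [SeminormedAddCommGroup E]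
    {s : Finset ι} {i : ι} (hi : i ∈ s) (g : ι → E) :
    ‖g i‖ - ∑ j ∈ s.erase i, ‖g j‖ ≤ ‖∑ j ∈ s, g j‖ := by
  rw [← Finset.add_sum_erase s g hi]
  calc ‖g i‖ - ∑ j ∈ s.erase i, ‖g j‖ ≤ ‖g i‖ - ‖∑ j ∈ s.erase i, g j‖ :=
        sub_le_sub_left (norm_sum_le _ _) _
    _ ≤ ‖g i + ∑ j ∈ s.erase i, g j‖ := norm_sub_le_norm_add _ _

theorem Real.exists_forall_mul_exp_mul_lt {a : ℝ} (ha : a < 1) (K : ℝ) {ε : ℝ}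
    (hε : 0 < ε) :
    ∃ c₀ > 0, ∀ x ≥ c₀, K * Real.exp (a * x) < ε * Real.exp x := by
  have hgrow : Tendsto (fun x ↦ Real.exp ((1 - a) * x)) atTop atTop :=
    Real.tendsto_exp_atTop.comp (tendsto_id.const_mul_atTop (sub_pos.2 ha))
  obtain ⟨c, hc⟩ := eventually_atTop.1 (hgrow.eventually_gt_atTop (K / ε))
  refine ⟨max c 1, by positivity, fun x hx ↦ ?_⟩
  have hx := hc x (le_of_max_le_left hx)
  rw [div_lt_iff₀ hε] at hx
  calc K * Real.exp (a * x) < Real.exp ((1 - a) * x) * ε * Real.exp (a * x) :=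
        mul_lt_mul_of_pos_right hx (Real.exp_pos _)
    _ = ε * (Real.exp ((1 - a) * x) * Real.exp (a * x)) := by ring
    _ = ε * Real.exp x := by rw [← Real.exp_add]; ring_nf

theorem exists_exp_re_sub_le_norm_f {p : ℕ} (hp : p ≠ 0) :
    ∃ a < 1, ∀ z : ℂ, 0 ≤ z.re →
      Real.exp z.re - p * Real.exp (a * z.re + |z.im|) ≤ ‖f p z‖ := by
  set ω := Complex.exp (2 * Real.pi * Complex.I / p)
  have hω : IsPrimitiveRoot ω p := isPrimitiveRoot_exp p hp
  obtain ⟨a, ha, hle⟩ := Finset.exists_lt_forall_le_of_forall_lt ((Finset.range p).erase 0)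
    (fun k ↦ (ω ^ k).re) fun k hk ↦
      hω.re_pow_lt_one (Finset.ne_of_mem_erase hk)
        (Finset.mem_range.1 (Finset.mem_of_mem_erase hk))
  refine ⟨a, ha, fun z hz ↦ ?_⟩
  have hterm : ∀ k ∈ (Finset.range p).erase 0,
      ‖Complex.exp (ω ^ k * z)‖ ≤ Real.exp (a * z.re + |z.im|) := by
    intro k hk
    have hωk : ‖ω ^ k‖ ≤ 1 := by rw [norm_pow, hω.norm'_eq_one hp, one_pow]
    rw [norm_exp]
    gcongr
    exact (re_mul_le_of_norm_le_one hωk z).trans (by gcongr; exact hle k hk)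
  have htail : ∑ k ∈ (Finset.range p).erase 0, ‖Complex.exp (ω ^ k * z)‖
      ≤ p * Real.exp (a * z.re + |z.im|) := by
    refine (Finset.sum_le_card_nsmul _ _ _ hterm).trans ?_
    rw [nsmul_eq_mul]
    gcongr
    exact_mod_cast (Finset.card_erase_le).trans (Finset.card_range p).le
  calc Real.exp z.re - p * Real.exp (a * z.re + |z.im|)
      ≤ ‖Complex.exp (ω ^ 0 * z)‖
          - ∑ k ∈ (Finset.range p).erase 0, ‖Complex.exp (ω ^ k * z)‖ := by
        rw [pow_zero, one_mul, norm_exp]; linarith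
    _ ≤ ‖f p z‖ := norm_sub_sum_erase_le_norm_sum (Finset.mem_range.2 (Nat.pos_of_ne_zero hp))
        fun k ↦ Complex.exp (ω ^ k * z)

theorem modulus_lower_bound_in_half_strip (p : ℕ) (hp : 3 ≤ p) :
    ∃ M₀ : ℕ, ∀ m : ℤ, (M₀ : ℤ) < m → ∀ ε : ℝ, 0 < ε → ε < 1 →
      ∃ c₀ : ℝ, 0 < c₀ ∧ ∀ c : ℝ, c₀ ≤ c → ∀ z : ℂ,
        c ≤ z.re → (2 * (m : ℝ) - 1) * Real.pi ≤ z.im → z.im ≤ (2 * (m : ℝ) + 1) * Real.pi →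
        0 < (f p z).re → (1 - ε) * Real.exp c < ‖f p z‖ := by
  obtain ⟨a, ha, hf⟩ := exists_exp_re_sub_le_norm_f (p := p) (by omega)
  refine ⟨0, fun m hm ε hε hε1 ↦ ?_⟩
  set B := (2 * (m : ℝ) + 1) * Real.pi
  obtain ⟨c₀, hc₀, hdom⟩ := Real.exists_forall_mul_exp_mul_lt ha (p * Real.exp B) hε
  refine ⟨c₀, hc₀, fun c hc z hre him₁ him₂ _ ↦ ?_⟩
  have hm₁ : (1 : ℝ) ≤ m := by exact_mod_cast hm
  have him : |z.im| ≤ B := abs_le.2 ⟨by nlinarith [Real.pi_pos], him₂⟩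
  have hx := hdom z.re (hc.trans hre)
  calc (1 - ε) * Real.exp c ≤ (1 - ε) * Real.exp z.re := by gcongr
    _ < Real.exp z.re - p * Real.exp B * Real.exp (a * z.re) := by linarith
    _ = Real.exp z.re - p * Real.exp (a * z.re + B) := by rw [Real.exp_add]; ring
    _ ≤ Real.exp z.re - p * Real.exp (a * z.re + |z.im|) := by gcongr
    _ ≤ ‖f p z‖ := hf z (hc₀.le.trans (hc.trans hre))
end
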